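/- Let p = Σ_{k=0}^{n} a_k(x,y) z^k be a homogeneous polynomial of degree n ≥ 1 with n odd, r = (n−1)/2, and let K_n = Σ_{k=0}^{r} μ_k^{(n)} z^k ∂_z^k be defined with the μ_k^{(n)} as in the even case (the unique solution of Σ_{k=0}^{r} B_{2i−1,k} μ_k = 0 for i = 1,…,r and Σ_{k=0}^{r} B_{n,k} μ_k = 1, where B_{ij} = i!/(i−j)! for i ≥ j, else 0). Then p is odd in z if and only if {K_n(p), z}_LP = 0. -/

import Mathlib

/-!
Write `p = Σ a_m z^m`. The operator `K_n` multiplies `a_m` by `Q(m)`, where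
`Q = Σ_k μ_k t(t-1)⋯(t-k+1)` has degree at most `r`, vanishes at the odd numbers `1, 3, …, n - 2`
and equals `1` at `n`; so `Q` has no further roots, and `Q(m) ≠ 0` for every even `m`. The bracket
with `z` applies the rotation field `x ∂_y - y ∂_x` to each `a_m`, and a form annihilated by it is
invariant under all rotations of the plane. The rotation by `π` is `-1`, so a rotation-invariant
form of odd degree vanishes. This applies to `a_m` for even `m`, as its degree `n - m` is odd.
-/

open Polynomial Finset

/-- The operator `K_n = Σ_{k=0}^{r} μ_k z^k ∂_z^k`. -/
noncomputable def Kop (r : ℕ) (mu : ℕ → ℝ)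
    (p : Polynomial (MvPolynomial (Fin 2) ℝ)) : Polynomial (MvPolynomial (Fin 2) ℝ) :=
  ∑ k ∈ Finset.range (r + 1), mu k • (Polynomial.X ^ k * Polynomial.derivative^[k] p)

/-- The linear system determining the coefficients `μ_k^{(n)}`. -/
def muSystem (n r : ℕ) (mu : ℕ → ℝ) : Prop :=
  (∀ i ∈ Finset.Icc 1 r,
      ∑ k ∈ Finset.range (r + 1), ((2 * i - 1).descFactorial k : ℝ) * mu k = 0) ∧
    ∑ k ∈ Finset.range (r + 1), (n.descFactorial k : ℝ) * mu k = 1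

/-- The Lie–Poisson bracket `{f, z}_LP = x ∂_y f − y ∂_x f`, acting coefficientwise. -/
noncomputable def brZ (p : Polynomial (MvPolynomial (Fin 2) ℝ)) :
    Polynomial (MvPolynomial (Fin 2) ℝ) :=
  p.sum fun k a =>
    Polynomial.C (MvPolynomial.X 0 * MvPolynomial.pderiv 1 a
      - MvPolynomial.X 1 * MvPolynomial.pderiv 0 a) * Polynomial.X ^ k

namespace MvPolynomial

theorem IsHomogeneous.eval_smul {σ R : Type*} [CommSemiring R] {φ : MvPolynomial σ R} {n : ℕ}
    (hφ : φ.IsHomogeneous n) (c : R) (x : σ → R) :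
    eval (c • x) φ = c ^ n * eval x φ := by
  rw [eval_eq, eval_eq, Finset.mul_sum]
  refine Finset.sum_congr rfl fun d hd => ?_
  have hdeg : ∑ i ∈ d.support, d i = n := by
    rw [← Finsupp.degree_apply, Finsupp.degree_eq_weight_one]
    exact hφ (mem_support_iff.mp hd)
  simp only [Pi.smul_apply, smul_eq_mul, mul_pow, Finset.prod_mul_distrib,
    Finset.prod_pow_eq_pow_sum, hdeg]
  ring

theorem hasDerivAt_eval {σ 𝕜 : Type*} [Fintype σ] [NontriviallyNormedField 𝕜]
    (p : MvPolynomial σ 𝕜) {c : 𝕜 → σ → 𝕜} {c' : σ → 𝕜} {t : 𝕜}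
    (hc : ∀ i, HasDerivAt (fun s => c s i) (c' i) t) :
    HasDerivAt (fun s => eval (c s) p) (∑ i, c' i * eval (c t) (pderiv i p)) t := by
  classical
  induction p using MvPolynomial.induction_on with
  | C a => simpa using hasDerivAt_const t a
  | add p q hp hq =>
    simp only [map_add, mul_add, Finset.sum_add_distrib]
    exact hp.add hq
  | mul_X p j hp =>
    simp only [map_mul, eval_X]
    refine (hp.mul (hc j)).congr_deriv ?_
    simp [Pi.single_apply, apply_ite (eval _), mul_add, Finset.sum_add_distrib, Finset.mul_sum,
      mul_comm, mul_left_comm, add_comm]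

end MvPolynomial

theorem Polynomial.coeff_comp_neg_X {R : Type*} [CommRing R] (p : Polynomial R) (m : ℕ) :
    (p.comp (-X)).coeff m = p.coeff m * (-1) ^ m := by
  simpa using p.comp_C_mul_X_coeff (r := -1) (n := m)

theorem Polynomial.comp_neg_X_eq_neg_iff {R : Type*} [CommRing R] [NoZeroDivisors R]
    [CharZero R] (p : Polynomial R) : p.comp (-X) = -p ↔ ∀ m, Even m → p.coeff m = 0 := by
  simp only [Polynomial.ext_iff, coeff_comp_neg_X, coeff_neg]
  refine ⟨fun h m hm => ?_, fun h m => ?_⟩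
  · simpa [hm.neg_one_pow, CharZero.eq_neg_self_iff] using h m
  · rcases Nat.even_or_odd m with hm | hm
    · simp [h m hm]
    · simp [hm.neg_one_pow]

namespace MvPolynomial

section rotDeriv

variable {R : Type*} [CommRing R]

noncomputable def rotDeriv (a : MvPolynomial (Fin 2) R) : MvPolynomial (Fin 2) R :=
  X 0 * pderiv 1 a - X 1 * pderiv 0 a

theorem rotDeriv_smul (c : R) (a : MvPolynomial (Fin 2) R) :
    rotDeriv (c • a) = c • rotDeriv a := by
  simp only [rotDeriv, Derivation.map_smul, mul_smul_comm, smul_sub]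

@[simp]
theorem rotDeriv_zero : rotDeriv (0 : MvPolynomial (Fin 2) R) = 0 := by
  simp [rotDeriv]

@[simp]
theorem rotDeriv_C (c : R) : rotDeriv (C c : MvPolynomial (Fin 2) R) = 0 := by
  simp [rotDeriv]

theorem IsHomogeneous.rotDeriv_eq_zero {a : MvPolynomial (Fin 2) R} (ha : a.IsHomogeneous 0) :
    rotDeriv a = 0 := by
  rw [totalDegree_eq_zero_iff_eq_C.mp (Nat.le_zero.mp ha.totalDegree_le), rotDeriv_C]

end rotDeriv

open Real

noncomputable def rotate (θ : ℝ) (x : Fin 2 → ℝ) : Fin 2 → ℝ :=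
  ![x 0 * cos θ - x 1 * sin θ, x 0 * sin θ + x 1 * cos θ]

theorem hasDerivAt_rotate (x : Fin 2 → ℝ) (θ : ℝ) (i : Fin 2) :
    HasDerivAt (fun s => rotate s x i) (![-rotate θ x 1, rotate θ x 0] i) θ := by
  fin_cases i
  · refine (((hasDerivAt_cos θ).const_mul (x 0)).sub
      ((hasDerivAt_sin θ).const_mul (x 1))).congr_deriv ?_
    simp [rotate]; ring
  · refine (((hasDerivAt_sin θ).const_mul (x 0)).add
      ((hasDerivAt_cos θ).const_mul (x 1))).congr_deriv ?_
    simp [rotate]; ring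

theorem eval_rotate_of_rotDeriv_eq_zero {a : MvPolynomial (Fin 2) ℝ} (h : rotDeriv a = 0)
    (θ : ℝ) (x : Fin 2 → ℝ) : eval (rotate θ x) a = eval x a := by
  have hderiv (t : ℝ) : HasDerivAt (fun s => eval (rotate s x) a) 0 t := by
    refine (hasDerivAt_eval a (hasDerivAt_rotate x t)).congr_deriv ?_
    have := congrArg (eval (rotate t x)) h
    simp only [rotDeriv, map_sub, map_mul, eval_X, map_zero] at this
    simp [Fin.sum_univ_two]
    linarith
  have := is_const_of_deriv_eq_zero (fun t => (hderiv t).differentiableAt)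
    (fun t => (hderiv t).deriv) θ 0
  have h0 : rotate 0 x = x := by
    ext i; fin_cases i <;> simp [rotate]
  rwa [h0] at this

theorem IsHomogeneous.eq_zero_of_rotDeriv_eq_zero {a : MvPolynomial (Fin 2) ℝ} {n : ℕ}
    (ha : a.IsHomogeneous n) (hn : Odd n) (h : rotDeriv a = 0) : a = 0 := by
  refine ha.eq_zero_of_forall_eval_eq_zero fun x => ?_
  have hπ : rotate π x = (-1 : ℝ) • x := by
    ext i; fin_cases i <;> simp [rotate]
  have := eval_rotate_of_rotDeriv_eq_zero h π x
  rw [hπ, ha.eval_smul, hn.neg_one_pow] at this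
  linarith

end MvPolynomial

noncomputable def muPoly (r : ℕ) (mu : ℕ → ℝ) : Polynomial ℝ :=
  ∑ k ∈ range (r + 1), Polynomial.C (mu k) * descPochhammer ℝ k

theorem muPoly_eval_natCast (r : ℕ) (mu : ℕ → ℝ) (m : ℕ) :
    (muPoly r mu).eval (m : ℝ) = ∑ k ∈ range (r + 1), (m.descFactorial k : ℝ) * mu k := by
  simp [muPoly, Polynomial.eval_finsetSum, descPochhammer_eval_eq_descFactorial, mul_comm]

theorem natDegree_muPoly_le (r : ℕ) (mu : ℕ → ℝ) : (muPoly r mu).natDegree ≤ r := by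
  refine Polynomial.natDegree_sum_le_of_forall_le _ _ fun k hk => ?_
  refine (Polynomial.natDegree_C_mul_le _ _).trans ?_
  rw [descPochhammer_natDegree]
  exact Nat.lt_succ_iff.mp (mem_range.mp hk)

theorem coeff_Kop (r : ℕ) (mu : ℕ → ℝ) (p : Polynomial (MvPolynomial (Fin 2) ℝ)) (m : ℕ) :
    (Kop r mu p).coeff m = (muPoly r mu).eval (m : ℝ) • p.coeff m := by
  rw [muPoly_eval_natCast, Kop, Polynomial.finsetSum_coeff, Finset.sum_smul]
  refine Finset.sum_congr rfl fun k _ => ?_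
  rw [Polynomial.coeff_smul, Polynomial.coeff_X_pow_mul']
  split_ifs with hk
  · rw [Polynomial.coeff_iterate_derivative, Nat.sub_add_cancel hk, ← Nat.cast_smul_eq_nsmul ℝ,
      smul_smul, mul_comm]
  · rw [smul_zero, Nat.descFactorial_eq_zero_iff_lt.mpr (by omega), Nat.cast_zero, zero_mul,
      zero_smul]

namespace muSystem

variable {n r : ℕ} {mu : ℕ → ℝ}

theorem muPoly_eval_eq_zero (hmu : muSystem n r mu) {m : ℕ} (hm : Odd m) (hmr : m < 2 * r) :
    (muPoly r mu).eval (m : ℝ) = 0 := by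
  obtain ⟨i, rfl⟩ := hm
  rw [muPoly_eval_natCast]
  have h := hmu.1 (i + 1) (mem_Icc.mpr ⟨by omega, by omega⟩)
  rwa [show 2 * (i + 1) - 1 = 2 * i + 1 by omega] at h

theorem muPoly_ne_zero (hmu : muSystem n r mu) : muPoly r mu ≠ 0 := by
  intro h
  have h1 := hmu.2
  rw [← muPoly_eval_natCast, h] at h1
  simp at h1

-- A nonzero polynomial of degree `≤ r` already has its `r` roots at `1, 3, …, 2r - 1`.
theorem muPoly_eval_ne_zero_of_even (hmu : muSystem n r mu) {m : ℕ} (hm : Even m) :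
    (muPoly r mu).eval (m : ℝ) ≠ 0 := by
  intro hzero
  set odds := (range r).image fun i : ℕ => ((2 * i + 1 : ℕ) : ℝ)
  have hodds : odds.card = r := by
    rw [card_image_of_injective _ fun i j hij => by simpa using hij, card_range]
  have hm_notMem : (m : ℝ) ∉ odds := by
    simp only [odds, mem_image, not_exists, not_and]
    intro i _ hi
    exact Nat.not_even_iff_odd.mpr (odd_two_mul_add_one i) (Nat.cast_injective hi ▸ hm)
  refine hmu.muPoly_ne_zero <|
    Polynomial.eq_zero_of_natDegree_lt_card_of_eval_eq_zero' _ (insert (m : ℝ) odds) ?_ ?_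
  · intro x hx
    rcases mem_insert.mp hx with rfl | hx
    · exact hzero
    · obtain ⟨i, hi, rfl⟩ := mem_image.mp hx
      exact hmu.muPoly_eval_eq_zero (odd_two_mul_add_one i) (by simp at hi; omega)
  · rw [card_insert_of_notMem hm_notMem, hodds]
    exact Nat.lt_succ_of_le (natDegree_muPoly_le r mu)

end muSystem

theorem coeff_brZ (q : Polynomial (MvPolynomial (Fin 2) ℝ)) (m : ℕ) :
    (brZ q).coeff m = MvPolynomial.rotDeriv (q.coeff m) := by
  simp only [brZ, Polynomial.sum, Polynomial.finsetSum_coeff, Polynomial.coeff_C_mul_X_pow,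
    Finset.sum_ite_eq]
  split_ifs with hm
  · rfl
  · simp [Polynomial.notMem_support_iff.mp hm]

theorem coeff_brZ_Kop (r : ℕ) (mu : ℕ → ℝ) (p : Polynomial (MvPolynomial (Fin 2) ℝ)) (m : ℕ) :
    (brZ (Kop r mu p)).coeff m =
      (muPoly r mu).eval (m : ℝ) • MvPolynomial.rotDeriv (p.coeff m) := by
  rw [coeff_brZ, coeff_Kop, MvPolynomial.rotDeriv_smul]

theorem z_odd_iff_bracket_Kop_eq_zero_of_odd_degree_general
    (n : ℕ) (hodd : Odd n)
    (p : Polynomial (MvPolynomial (Fin 2) ℝ))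
    (hdeg : p.natDegree ≤ n)
    (hhom : ∀ k ≤ n, (p.coeff k).IsHomogeneous (n - k))
    (mu : ℕ → ℝ) (hmu : muSystem n ((n - 1) / 2) mu) :
    p.comp (-Polynomial.X) = -p ↔ brZ (Kop ((n - 1) / 2) mu p) = 0 := by
  obtain ⟨r, rfl⟩ := hodd
  rw [show (2 * r + 1 - 1) / 2 = r by omega] at hmu ⊢
  rw [comp_neg_X_eq_neg_iff]
  simp only [Polynomial.ext_iff, coeff_brZ_Kop, coeff_zero]
  constructor
  · intro h m
    rcases Nat.even_or_odd m with hm | hm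
    · simp [h m hm]
    rcases lt_trichotomy m (2 * r + 1) with hlt | rfl | hgt
    · rw [hmu.muPoly_eval_eq_zero hm (by obtain ⟨k, rfl⟩ := hm; omega), zero_smul]
    · have hconst : (p.coeff (2 * r + 1)).IsHomogeneous 0 := by simpa using hhom _ le_rfl
      rw [hconst.rotDeriv_eq_zero, smul_zero]
    · simp [coeff_eq_zero_of_natDegree_lt (hdeg.trans_lt hgt)]
  · intro h m hm
    by_cases hmn : m ≤ 2 * r + 1
    · have hrot := (smul_eq_zero.mp (h m)).resolve_left (hmu.muPoly_eval_ne_zero_of_even hm)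
      refine (hhom m hmn).eq_zero_of_rotDeriv_eq_zero ?_ hrot
      obtain ⟨k, rfl⟩ := hm
      exact ⟨r - k, by omega⟩
    · exact coeff_eq_zero_of_natDegree_lt (by omega)

theorem z_odd_iff_bracket_Kop_eq_zero_of_odd_degree
    (n : ℕ) (hn : 1 ≤ n) (hodd : Odd n)
    (p : Polynomial (MvPolynomial (Fin 2) ℝ))
    (hdeg : p.natDegree ≤ n)
    (hhom : ∀ k ≤ n, (p.coeff k).IsHomogeneous (n - k))
    (mu : ℕ → ℝ) (hmu : muSystem n ((n - 1) / 2) mu)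
    (huniq : ∀ mu' : ℕ → ℝ, muSystem n ((n - 1) / 2) mu' →
      ∀ k ∈ Finset.range ((n - 1) / 2 + 1), mu' k = mu k) :
    p.comp (-Polynomial.X) = -p ↔ brZ (Kop ((n - 1) / 2) mu p) = 0 :=
  z_odd_iff_bracket_Kop_eq_zero_of_odd_degree_general n hodd p hdeg hhom mu hmu
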